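/- arXiv:2406.05953 — 3 statements merged into one kernel-verified Lean document; each statement's English description precedes it below -/
import Mathlib

section
/- Let τ > 0, r ∈ ℝ, and let n ≥ 1 be a natural number with n·exp(r/τ) ≥ 1. Then there exists no real number V satisfying the fixed-point equation V = τ·log(n·exp((r+V)/τ) + exp(r/τ)). (The value of the loopy MDP of Example 2 diverges when 1 ≤ n·exp(r/τ).) -/
/-! Writing `x = exp (V / τ)`, the fixed-point equation reads `x = n·exp(r/τ)·x + exp(r/τ)`,
whose right-hand side strictly exceeds `x` once `n·exp(r/τ) ≥ 1`: the soft Bellman operator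
strictly increases every value. -/

open Real

theorem lt_mul_log_mul_exp_div_add {τ c b : ℝ} (hτ : 0 < τ) (hc : 1 ≤ c) (hb : 0 < b) (V : ℝ) :
    V < τ * log (c * exp (V / τ) + b) := by
  have hx : exp (V / τ) < c * exp (V / τ) + b := by
    nlinarith [exp_pos (V / τ)]
  calc V = τ * log (exp (V / τ)) := by rw [log_exp]; field_simp
    _ < τ * log (c * exp (V / τ) + b) :=
      mul_lt_mul_of_pos_left (log_lt_log (exp_pos _) hx) hτ

theorem stmt2_general (τ r : ℝ) (hτ : 0 < τ) (n : ℕ)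
    (hdiv : 1 ≤ (n : ℝ) * Real.exp (r / τ)) :
    ¬ ∃ V : ℝ, V = τ * Real.log ((n : ℝ) * Real.exp ((r + V) / τ) + Real.exp (r / τ)) := by
  rintro ⟨V, hV⟩
  have hsplit : (n : ℝ) * exp ((r + V) / τ) = (n * exp (r / τ)) * exp (V / τ) := by
    rw [add_div, exp_add, mul_assoc]
  rw [hsplit] at hV
  exact (lt_mul_log_mul_exp_div_add hτ hdiv (exp_pos _) V).ne hV

/-- Example 2 (divergence): if `n·exp(r/τ) ≥ 1`, then no real number `V` satisfies the
soft Bellman fixed-point equation `V = τ·log(n·exp((r+V)/τ) + exp(r/τ))`. -/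
theorem stmt2 (τ r : ℝ) (hτ : 0 < τ) (n : ℕ) (hn : 1 ≤ n)
    (hdiv : 1 ≤ (n : ℝ) * Real.exp (r / τ)) :
    ¬ ∃ V : ℝ, V = τ * Real.log ((n : ℝ) * Real.exp ((r + V) / τ) + Real.exp (r / τ)) :=
  stmt2_general τ r hτ n hdiv
end

section
/- Let f : [0,1] → ℝ be strictly convex with f(0) = 0 and f(1) = 0, and let g : ℝ → ℝ be strictly increasing. For each n ≥ 1 define the range L(n) = (sup over π ∈ Δ_n of g(Σ_a f(π(a)))) − (inf over π ∈ Δ_n of g(Σ_a f(π(a)))). Then L(n) = g(0) − g(n·f(1/n)), and L is strictly increasing in n: for all 1 ≤ n < m, L(n) < L(m). (Theorem: the range of a standard regularizer satisfying Assumption 2 grows with the number of actions.) -/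
/-!
On the simplex every coordinate lies in `[0, 1]`, where convexity and `f 0 = f 1 = 0` force
`f ≤ 0`; hence `∑ a, f (π a)` is maximal (equal to `0`) at a vertex. By Jensen it is minimal at
the barycentre, with value `n * f (1 / n)`. Since `g` is increasing, the range is
`g 0 - g (n * f (1 / n))`. Finally `n * f (1 / n)` is the slope of the secant of `f` through `0`
and `1 / n`, which strict convexity makes strictly decreasing in `n`.
-/

open Finset Set

section Simplex

variable {ι : Type*} [Fintype ι] {f : ℝ → ℝ}

lemma ConvexOn.nonpos_of_mem_Icc (hf : ConvexOn ℝ (Icc 0 1) f) (h0 : f 0 = 0) (h1 : f 1 = 0)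
    {x : ℝ} (hx : x ∈ Icc (0 : ℝ) 1) : f x ≤ 0 := by
  have := hf.le_on_segment (left_mem_Icc.2 zero_le_one) (right_mem_Icc.2 zero_le_one)
    (by rwa [segment_eq_Icc zero_le_one])
  simpa [h0, h1] using this

lemma isGreatest_image_sum_stdSimplex [Nonempty ι] (hf : ConvexOn ℝ (Icc 0 1) f)
    (h0 : f 0 = 0) (h1 : f 1 = 0) :
    IsGreatest ((fun π : ι → ℝ ↦ ∑ a, f (π a)) '' stdSimplex ℝ ι) 0 := by
  classical
  refine ⟨⟨Pi.single (Classical.arbitrary ι) 1, single_mem_stdSimplex ℝ _, ?_⟩, ?_⟩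
  · refine Finset.sum_eq_zero fun a _ ↦ ?_
    rcases eq_or_ne a (Classical.arbitrary ι) with rfl | ha
    · simpa using h1
    · simpa [ha] using h0
  · rintro _ ⟨π, hπ, rfl⟩
    exact Finset.sum_nonpos fun a _ ↦ hf.nonpos_of_mem_Icc h0 h1 (mem_Icc_of_mem_stdSimplex hπ a)

lemma isLeast_image_sum_stdSimplex [Nonempty ι] (hf : ConvexOn ℝ (Icc 0 1) f) :
    IsLeast ((fun π : ι → ℝ ↦ ∑ a, f (π a)) '' stdSimplex ℝ ι)
      (Fintype.card ι * f (1 / Fintype.card ι)) := by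
  have hcard : (0 : ℝ) < Fintype.card ι := by exact_mod_cast Fintype.card_pos
  refine ⟨⟨fun _ ↦ 1 / Fintype.card ι, ⟨fun _ ↦ by positivity, ?_⟩, ?_⟩, ?_⟩
  · simp [hcard.ne']
  · simp
  · rintro _ ⟨π, hπ, rfl⟩
    have jensen := hf.map_sum_le (t := univ) (w := fun _ ↦ (1 : ℝ) / Fintype.card ι)
      (p := π) (fun _ _ ↦ by positivity) (by simp [hcard.ne'])
      fun a _ ↦ mem_Icc_of_mem_stdSimplex hπ a
    simp only [smul_eq_mul, ← Finset.mul_sum, hπ.2, mul_one] at jensen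
    calc (Fintype.card ι : ℝ) * f (1 / Fintype.card ι)
        ≤ Fintype.card ι * (1 / Fintype.card ι * ∑ a, f (π a)) := by gcongr
      _ = ∑ a, f (π a) := by field_simp

end Simplex

lemma setOf_eq_image_stdSimplex {ι : Type*} [Fintype ι] (f g : ℝ → ℝ) :
    {x : ℝ | ∃ π : ι → ℝ, (∀ a, 0 ≤ π a) ∧ (∑ a, π a = 1) ∧ x = g (∑ a, f (π a))} =
      g '' ((fun π : ι → ℝ ↦ ∑ a, f (π a)) '' stdSimplex ℝ ι) := by
  ext x
  simp only [mem_ofPred_eq, mem_image, stdSimplex]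
  constructor
  · rintro ⟨π, hπ0, hπ1, rfl⟩
    exact ⟨_, ⟨π, ⟨hπ0, hπ1⟩, rfl⟩, rfl⟩
  · rintro ⟨_, ⟨π, ⟨hπ0, hπ1⟩, rfl⟩, rfl⟩
    exact ⟨π, hπ0, hπ1, rfl⟩

lemma StrictConvexOn.mul_apply_one_div_lt {f : ℝ → ℝ} (hf : StrictConvexOn ℝ (Icc 0 1) f)
    (h0 : f 0 = 0) {x y : ℝ} (hx : 1 ≤ x) (hxy : x < y) :
    y * f (1 / y) < x * f (1 / x) := by
  have hx0 : 0 < x := zero_lt_one.trans_le hx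
  have hy0 : 0 < y := hx0.trans hxy
  have slope := hf.secant_strict_mono (a := 0) (x := 1 / y) (y := 1 / x)
    (left_mem_Icc.2 zero_le_one) ⟨by positivity, by rw [div_le_one hy0]; linarith⟩
    ⟨by positivity, by rwa [div_le_one hx0]⟩ (by positivity) (by positivity)
    (one_div_lt_one_div_of_lt hx0 hxy)
  simpa [h0, div_eq_mul_inv, mul_comm] using slope

/-- Theorem: the range of a standard regularizer `Ω(π) = g(∑ a, f (π a))` satisfying
Assumption 2 equals `g 0 − g (n·f(1/n))` on `Δ_n`, and grows strictly with the number
of actions. -/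
theorem stmt8 (f : ℝ → ℝ) (hf : StrictConvexOn ℝ (Set.Icc (0 : ℝ) 1) f)
    (h0 : f 0 = 0) (h1 : f 1 = 0) (g : ℝ → ℝ) (hg : StrictMono g)
    (L : ℕ → ℝ)
    (hL : ∀ n, 1 ≤ n →
      L n = sSup {x : ℝ | ∃ π : Fin n → ℝ, (∀ a, 0 ≤ π a) ∧ (∑ a, π a = 1) ∧
              x = g (∑ a, f (π a))}
          - sInf {x : ℝ | ∃ π : Fin n → ℝ, (∀ a, 0 ≤ π a) ∧ (∑ a, π a = 1) ∧
              x = g (∑ a, f (π a))}) :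
    (∀ n, 1 ≤ n → L n = g 0 - g ((n : ℝ) * f (1 / n))) ∧
    (∀ n m : ℕ, 1 ≤ n → n < m → L n < L m) := by
  have hrange : ∀ n, 1 ≤ n → L n = g 0 - g ((n : ℝ) * f (1 / n)) := by
    intro n hn
    have : Nonempty (Fin n) := ⟨⟨0, hn⟩⟩
    have hmax :=
      hg.map_isGreatest.2 (isGreatest_image_sum_stdSimplex (ι := Fin n) hf.convexOn h0 h1)
    have hmin := hg.map_isLeast.2 (isLeast_image_sum_stdSimplex (ι := Fin n) hf.convexOn)
    rw [Fintype.card_fin] at hmin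
    rw [hL n hn, setOf_eq_image_stdSimplex, hmax.csSup_eq, hmin.csInf_eq]
  refine ⟨hrange, fun n m hn hnm ↦ ?_⟩
  rw [hrange n hn, hrange m (hn.trans hnm.le)]
  have := hg (hf.mul_apply_one_div_lt h0 (x := n) (y := m) (by exact_mod_cast hn)
    (by exact_mod_cast hnm))
  linarith
end

section
/- Let τ > 0, let n ≥ 2 be a natural number, let r < −τ, and set τ' = τ/log n. Then n·exp(r/τ') < 1 and there exists a real number V satisfying the decoupled soft Bellman fixed-point equation V = τ'·log(n·exp((r+V)/τ') + exp(r/τ')), namely V = r − τ'·log(1 − n·exp(r/τ')). (Proposition 1 applied to the loopy MDP of Example 2: with decoupled entropy, the regularized Bellman equation converges whenever r < −τ.) -/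
/-!
With `c = exp (r / τ')`, the fixed-point equation says `exp (V / τ') = c * (n * exp (V / τ') + 1)`,
whose solution `exp (V / τ') = c / (1 - n * c)` is the geometric series of the self-loops; it
exists iff `n * c < 1`. For `τ' = τ / log n` this condition reads `r / τ' < -log n`, i.e. `r < -τ`.
-/

open Real Function

theorem mul_exp_div_div_log_lt_one {k τ r : ℝ} (hk : 1 < k) (hτ : 0 < τ) (hr : r < -τ) :
    k * exp (r / (τ / log k)) < 1 := by
  have hlog : 0 < log k := log_pos hk
  have hexponent : r / (τ / log k) < -log k := by
    rw [div_div_eq_mul_div, div_lt_iff₀ hτ]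
    nlinarith
  calc k * exp (r / (τ / log k)) < k * exp (-log k) := by gcongr
    _ = 1 := by rw [exp_neg, exp_log (by linarith), mul_inv_cancel₀ (by positivity)]

theorem isFixedPt_softBellman_loop {k t r : ℝ} (ht : t ≠ 0) (hk : k * exp (r / t) < 1) :
    IsFixedPt (fun V => t * log (k * exp ((r + V) / t) + exp (r / t)))
      (r - t * log (1 - k * exp (r / t))) := by
  set c := exp (r / t)
  have hpos : 0 < 1 - k * c := by linarith
  have hexp : exp ((r + (r - t * log (1 - k * c))) / t) = c * c / (1 - k * c) := by
    rw [show (r + (r - t * log (1 - k * c))) / t = r / t + r / t - log (1 - k * c) by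
      field_simp; ring, exp_sub, exp_add, exp_log hpos]
  have hsum : k * (c * c / (1 - k * c)) + c = c / (1 - k * c) := by
    field_simp
    ring
  change t * log _ = _
  rw [hexp, hsum, log_div (exp_ne_zero _) hpos.ne', log_exp]
  field_simp

/-- Proposition 1 for the loopy MDP of Example 2: with decoupled entropy (effective
temperature `τ' = τ/log n`) and `r < −τ`, we have `n·exp(r/τ') < 1` and the decoupled
soft Bellman fixed-point equation has a solution, namely
`V = r − τ'·log(1 − n·exp(r/τ'))`. -/
theorem stmt14 (τ r : ℝ) (hτ : 0 < τ) (n : ℕ) (hn : 2 ≤ n) (hr : r < -τ)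
    (τ' : ℝ) (hτ' : τ' = τ / Real.log n) :
    (n : ℝ) * Real.exp (r / τ') < 1 ∧
    ∃ V : ℝ, V = r - τ' * Real.log (1 - (n : ℝ) * Real.exp (r / τ')) ∧
      V = τ' * Real.log ((n : ℝ) * Real.exp ((r + V) / τ') + Real.exp (r / τ')) := by
  have hn1 : (1 : ℝ) < n := by exact_mod_cast hn
  have hτ'pos : 0 < τ' := by rw [hτ']; exact div_pos hτ (log_pos hn1)
  have hloop : (n : ℝ) * exp (r / τ') < 1 := hτ' ▸ mul_exp_div_div_log_lt_one hn1 hτ hr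
  exact ⟨hloop, _, rfl, (isFixedPt_softBellman_loop hτ'pos.ne' hloop).eq.symm⟩
end
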